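/- Let E = EuclideanSpace ℝ (Fin d) and F = EuclideanSpace ℝ (Fin D), let f : E → F be K-Lipschitz, let β, α ∈ ℝ, and let ι ∈ {−1, +1}. Then the map (x, x') ↦ max(0, ι·(‖f(x) − f(x')‖ − β) + α) is Lipschitz with constant √2·K on E × E equipped with the Euclidean product metric dist((x,x'),(u,u')) = √(dist(x,u)² + dist(x',u')²). -/
import Mathlib

lemma aux_sum_le_sqrt2 (a b : ℝ) (ha : 0 ≤ a) (hb : 0 ≤ b) :
    a + b ≤ Real.sqrt 2 * Real.sqrt (a ^ 2 + b ^ 2) := by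
  rw [← Real.sqrt_mul (by norm_num)]
  have h : (a+b)^2 ≤ 2*(a^2+b^2) := by nlinarith [sq_nonneg (a-b)]
  calc a + b = Real.sqrt ((a+b)^2) := (Real.sqrt_sq (by positivity)).symm
    _ ≤ Real.sqrt (2*(a^2+b^2)) := Real.sqrt_le_sqrt h

/-- If `f` is `K`-Lipschitz, then the generalized contrastive loss
`(x, x') ↦ max(0, ι·(‖f x − f x'‖ − β) + α)` is `√2·K`-Lipschitz on `E × E`
with the Euclidean product metric `√(dist(x,u)² + dist(x',u')²)`. -/
theorem stmt_7 {d D : ℕ}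
    (f : EuclideanSpace ℝ (Fin d) → EuclideanSpace ℝ (Fin D))
    (K : NNReal) (hf : LipschitzWith K f)
    (β α ι : ℝ) (hι : ι = 1 ∨ ι = -1) :
    ∀ x x' u u' : EuclideanSpace ℝ (Fin d),
      |max 0 (ι * (‖f x - f x'‖ - β) + α) - max 0 (ι * (‖f u - f u'‖ - β) + α)| ≤
        Real.sqrt 2 * (K : ℝ) * Real.sqrt (dist x u ^ 2 + dist x' u' ^ 2) := by
  intro x x' u u'
  have h1 : |max 0 (ι * (‖f x - f x'‖ - β) + α) - max 0 (ι * (‖f u - f u'‖ - β) + α)|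
      ≤ |(ι * (‖f x - f x'‖ - β) + α) - (ι * (‖f u - f u'‖ - β) + α)| := by
    rw [max_comm 0 (ι * (‖f x - f x'‖ - β) + α), max_comm 0 (ι * (‖f u - f u'‖ - β) + α)]
    exact abs_max_sub_max_le_abs _ _ _
  have h2 : |(ι * (‖f x - f x'‖ - β) + α) - (ι * (‖f u - f u'‖ - β) + α)|
      = |‖f x - f x'‖ - ‖f u - f u'‖| := by
    rcases hι with h | h <;> rw [h] <;> ring_nf <;>
      rw [abs_sub_comm] <;> congr 1 <;> ring
  have h3 : |‖f x - f x'‖ - ‖f u - f u'‖| ≤ ‖(f x - f x') - (f u - f u')‖ :=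
    abs_norm_sub_norm_le _ _
  have h4 : ‖(f x - f x') - (f u - f u')‖ ≤ ‖f x - f u‖ + ‖f x' - f u'‖ := by
    have : (f x - f x') - (f u - f u') = (f x - f u) - (f x' - f u') := by abel
    rw [this]; exact norm_sub_le _ _
  have h5 : ‖f x - f u‖ ≤ K * dist x u := by
    rw [← dist_eq_norm]; exact hf.dist_le_mul x u
  have h6 : ‖f x' - f u'‖ ≤ K * dist x' u' := by
    rw [← dist_eq_norm]; exact hf.dist_le_mul x' u'
  have h7 : (K : ℝ) * dist x u + K * dist x' u'
      ≤ Real.sqrt 2 * K * Real.sqrt (dist x u ^ 2 + dist x' u' ^ 2) := by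
    have := aux_sum_le_sqrt2 (dist x u) (dist x' u') dist_nonneg dist_nonneg
    have hK : (0:ℝ) ≤ K := K.2
    nlinarith [Real.sqrt_nonneg (dist x u ^ 2 + dist x' u' ^ 2), Real.sqrt_nonneg 2]
  linarith [h1, h2 ▸ h1]
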